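/- Let n, m be natural numbers, let F : (Fin n → Bool) → Bool and G : (Fin m → Bool) → Bool be Boolean functions, and let H be the combiner of F and G, i.e., the Boolean function in the variables (x : Fin n → Bool, y : Fin m → Bool, z : Bool, z' : Bool) defined by H(x,y,z,z') = (F x ∧ z) ∨ (¬z ∧ (∀ i, x i = true) ∧ G y ∧ z'). Then ‖H‖ = ‖F‖ · 2^(m+1) + ‖G‖, where ‖H‖ is the number of tuples (x,y,z,z') on which H evaluates to true. -/

import Mathlib

/-!
For `z = true` the combiner is just `F x`, with `y` and `z'` free, contributing `‖F‖ · 2^m · 2`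
assignments; for `z = false` it holds exactly at `x = 1…1`, `z' = true` and `G y`, contributing
`‖G‖`. The two parts are disjoint since they differ in `z`.
-/

open Finset

section Combiner

variable {α β : Type*} [Fintype α] [Fintype β] [DecidableEq α] [DecidableEq β]

/-- The point `a₀` plays the role of the all-true assignment in the combiner of `F` and `G`. -/
def combiner (f : α → Bool) (g : β → Bool) (a₀ : α) (p : α × β × Bool × Bool) : Bool :=
  (f p.1 && p.2.2.1) || (!p.2.2.1 && decide (p.1 = a₀) && g p.2.1 && p.2.2.2)

theorem filter_combiner_eq_union (f : α → Bool) (g : β → Bool) (a₀ : α) :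
    univ.filter (combiner f g a₀ · = true) =
      univ.filter (f · = true) ×ˢ univ ×ˢ {true} ×ˢ univ ∪
        {a₀} ×ˢ univ.filter (g · = true) ×ˢ {false} ×ˢ {true} := by
  ext ⟨x, y, z, z'⟩
  cases z <;> cases z' <;> simp [combiner, and_comm, @eq_comm _ a₀]

theorem card_filter_combiner (f : α → Bool) (g : β → Bool) (a₀ : α) :
    #(univ.filter (combiner f g a₀ · = true)) =
      #(univ.filter (f · = true)) * (Fintype.card β * 2) + #(univ.filter (g · = true)) := by
  rw [filter_combiner_eq_union, card_union_of_disjoint]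
  · simp [card_product]
  · simp [disjoint_left]

end Combiner

/-- The combining lemma of Cai and Hemachandra:
`‖H‖ = ‖F‖ * 2^(m+1) + ‖G‖` for the combiner `H` of `F` and `G`. -/
theorem combiner_count (n m : ℕ) (F : (Fin n → Bool) → Bool) (G : (Fin m → Bool) → Bool)
    (H : (Fin n → Bool) → (Fin m → Bool) → Bool → Bool → Bool)
    (hH : ∀ (x : Fin n → Bool) (y : Fin m → Bool) (z z' : Bool),
      H x y z z' = ((F x && z) || (!z && decide (∀ i, x i = true) && G y && z'))) :
    Nat.card {p : (Fin n → Bool) × (Fin m → Bool) × Bool × Bool |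
        H p.1 p.2.1 p.2.2.1 p.2.2.2 = true} =
      Nat.card {σ : Fin n → Bool | F σ = true} * 2 ^ (m + 1) +
        Nat.card {σ : Fin m → Bool | G σ = true} := by
  have hH_combiner : ∀ p : (Fin n → Bool) × (Fin m → Bool) × Bool × Bool,
      H p.1 p.2.1 p.2.2.1 p.2.2.2 = combiner F G (fun _ => true) p := by
    rintro ⟨x, y, z, z'⟩
    simp only [hH, combiner, funext_iff]
  simp only [Set.coe_ofPred, Nat.card_eq_fintype_card, Fintype.card_subtype, hH_combiner,
    card_filter_combiner, Fintype.card_fun, Fintype.card_bool, Fintype.card_fin, pow_succ]
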